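/- Define v(m, n) = (∑_{i=0}^{n−2} C(i + m − 1, i + 1)·2^i) − C(m + n − 6, m − 4)·2^{n−3} + 1. Then for all natural numbers m ≥ 2 and n ≥ 3, v(m+1, n+1) = 2·v(m+1, n) + v(m, n+1) − 1. -/
import Mathlib


/-- Binomial coefficient with integer arguments: `C a b = 0` if `b < 0` or `b > a`. -/
def intChoose (a b : ℤ) : ℤ :=
  if 0 ≤ b ∧ b ≤ a then (Nat.choose a.toNat b.toNat : ℤ) else 0

/-- The formula `v(m, n)` from the appendix. -/
def vFormula (m n : ℕ) : ℤ :=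
  (∑ i ∈ Finset.range (n - 1), intChoose ((i : ℤ) + m - 1) ((i : ℤ) + 1) * 2 ^ i)
    - intChoose ((m : ℤ) + n - 6) ((m : ℤ) - 4) * 2 ^ (n - 3) + 1

lemma intChoose_pascal (a b : ℤ) (ha : 1 ≤ a) :
    intChoose a b = intChoose (a-1) b + intChoose (a-1) (b-1) := by
  unfold intChoose
  rcases lt_or_ge b 0 with hb | hb
  · rw [if_neg (by omega), if_neg (by omega), if_neg (by omega)]; ring
  rcases eq_or_lt_of_le hb with hb0 | hb1
  · subst hb0
    rw [if_pos (by omega), if_pos (by omega), if_neg (by omega)]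
    simp
  rcases lt_or_ge a b with hab | hab
  · rw [if_neg (by omega), if_neg (by omega), if_neg (by omega)]; ring
  rcases eq_or_lt_of_le hab with hab0 | hab1
  · rw [if_pos (by omega), if_neg (by omega), if_pos (by omega)]
    rw [hab0, Nat.choose_self, show (a-1).toNat = (b-1).toNat from by omega, Nat.choose_self]
    ring
  · rw [if_pos (by omega), if_pos (by omega), if_pos (by omega)]
    have h1 : a.toNat = (a.toNat - 1) + 1 := by omega
    have h2 : b.toNat = (b.toNat - 1) + 1 := by omega
    rw [h1, h2, Nat.choose_succ_succ,
      show (a-1).toNat = a.toNat - 1 from by omega,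
      show (b-1).toNat = b.toNat - 1 from by omega, h2]
    push_cast; ring

lemma intChoose_zero (M : ℤ) (hM : 0 ≤ M) : intChoose M 0 = 1 := by
  unfold intChoose
  rw [if_pos ⟨le_refl 0, hM⟩]
  simp

lemma sumA (M : ℤ) (hM : 1 ≤ M) (K : ℕ) :
    ∑ i ∈ Finset.range (K+1), intChoose ((i:ℤ) + M) ((i:ℤ)+1) * 2^i
  = (∑ i ∈ Finset.range (K+1), intChoose ((i:ℤ) + M - 1) ((i:ℤ)+1) * 2^i) + 1
    + 2 * ∑ i ∈ Finset.range K, intChoose ((i:ℤ) + M) ((i:ℤ)+1) * 2^i := by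
  have h1 : ∀ i ∈ Finset.range (K+1), intChoose ((i:ℤ) + M) ((i:ℤ)+1) * 2^i
      = intChoose ((i:ℤ) + M - 1) ((i:ℤ)+1) * 2^i
        + intChoose ((i:ℤ) + M - 1) ((i:ℤ)) * 2^i := by
    intro i _
    rw [intChoose_pascal ((i:ℤ)+M) ((i:ℤ)+1) (by omega)]
    ring_nf
  rw [Finset.sum_congr rfl h1, Finset.sum_add_distrib]
  have h2 : ∑ i ∈ Finset.range (K+1), intChoose ((i:ℤ)+M-1) ((i:ℤ)) * 2^i
      = 1 + 2 * ∑ i ∈ Finset.range K, intChoose ((i:ℤ)+M) ((i:ℤ)+1) * 2^i := by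
    rw [Finset.sum_range_succ']
    have h0 : intChoose ((0:ℕ) + M - 1) ((0:ℕ):ℤ) * 2^(0:ℕ) = 1 := by
      simp [intChoose_zero (M-1) (by omega)]
    rw [h0]
    have h3 : ∀ i ∈ Finset.range K, intChoose ((↑(i+1):ℤ)+M-1) ((↑(i+1):ℤ)) * 2^(i+1)
        = 2 * (intChoose ((i:ℤ)+M) ((i:ℤ)+1) * 2^i) := by
      intro i _
      have e1 : ((↑(i+1):ℤ)+M-1) = (i:ℤ)+M := by push_cast; ring
      have e2 : ((↑(i+1):ℤ)) = (i:ℤ)+1 := by push_cast; ring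
      rw [e1, e2, pow_succ]
      ring
    rw [Finset.sum_congr rfl h3, ← Finset.mul_sum]
    ring
  rw [h2]
  ring

theorem stmt18 (m n : ℕ) (hm : 2 ≤ m) (hn : 3 ≤ n) :
    vFormula (m + 1) (n + 1) = 2 * vFormula (m + 1) n + vFormula m (n + 1) - 1 := by
  obtain ⟨K, rfl⟩ : ∃ K, n = K + 3 := ⟨n - 3, by omega⟩
  simp only [vFormula]
  have r1 : K + 3 + 1 - 1 = (K + 2) + 1 := by omega
  have r2 : K + 3 - 1 = K + 2 := by omega
  have r3 : K + 3 + 1 - 3 = K + 1 := by omega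
  have r4 : K + 3 - 3 = K := by omega
  rw [r1, r2, r3, r4]
  have c1 : ∑ i ∈ Finset.range ((K+2)+1), intChoose ((i:ℤ) + ↑(m+1) - 1) ((i:ℤ)+1) * 2^i
      = ∑ i ∈ Finset.range ((K+2)+1), intChoose ((i:ℤ) + (m:ℤ)) ((i:ℤ)+1) * 2^i := by
    apply Finset.sum_congr rfl; intro i _
    have : ((i:ℤ) + ↑(m+1) - 1) = (i:ℤ) + (m:ℤ) := by push_cast; ring
    rw [this]
  rw [c1]
  have c2 : ∑ i ∈ Finset.range (K+2), intChoose ((i:ℤ) + ↑(m+1) - 1) ((i:ℤ)+1) * 2^i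
      = ∑ i ∈ Finset.range (K+2), intChoose ((i:ℤ) + (m:ℤ)) ((i:ℤ)+1) * 2^i := by
    apply Finset.sum_congr rfl; intro i _
    have : ((i:ℤ) + ↑(m+1) - 1) = (i:ℤ) + (m:ℤ) := by push_cast; ring
    rw [this]
  rw [c2]
  have hsum := sumA (m:ℤ) (by exact_mod_cast Nat.one_le_of_lt hm) (K+2)
  have hpas := intChoose_pascal ((↑(m+1):ℤ) + ↑(K+3+1) - 6) ((↑(m+1):ℤ) - 4) (by push_cast; omega)
  have e1 : ((↑(m+1):ℤ) + ↑(K+3+1) - 6) - 1 = (↑(m+1):ℤ) + ↑(K+3) - 6 := by push_cast; ring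
  have e2 : ((↑(m+1):ℤ) - 4) - 1 = (m:ℤ) - 4 := by push_cast; ring
  have e3 : (↑(m+1):ℤ) + ↑(K+3) - 6 = (m:ℤ) + ↑(K+3+1) - 6 := by push_cast; ring
  rw [e1, e2] at hpas
  rw [hpas, e3]
  linear_combination hsum
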